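/- arXiv:1909.05103 — 2 statements merged into one kernel-verified Lean document; each statement's English description precedes it below -/
import Mathlib

section
/- There exist matrices g, h ∈ GL_{n+1}(𝒪) such that, as matrices over K, t^{−λ} · x̃ · t^{ν*} = g · t^{μ} · h. (This is the content of the assertion that the second point ξ̃ = ([λ], x̃[λ+μ−Nβ∨], [0]) also belongs to the cyclic convolution variety Gr_{c(λ,μ,ν)}.) -/
open Matrix

noncomputable section

/-- The ring `𝒪 = ℂ[[t]]` of formal power series. -/
abbrev OO : Type := PowerSeries ℂ

/-- The field `K = ℂ((t))` of formal Laurent series. -/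
abbrev KK : Type := LaurentSeries ℂ

/-- `t^k ∈ K` for an integer `k`. -/
def tz (k : ℤ) : KK := HahnSeries.single k 1

/-- The inclusion `𝒪 → K`. -/
def coeO : OO →+* KK := HahnSeries.ofPowerSeries ℤ ℂ

/-- The `GL`-coordinates of the coroot `β∨ = e_p − e_{q+1}` (indices `0`-based). -/
def bcov (p q : ℕ) (i : ℕ) : ℤ := (if i = p then 1 else 0) - (if i = q + 1 then 1 else 0)

/-- The matrix `x̃ = I + Σ_{i=p}^{q} t^{λ_i − λ_{q+1} − N} E_{i,q+1}` (indices `0`-based). -/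
def xtMat (n N p q : ℕ) (lam : ℕ → ℤ) : Matrix (Fin (n+1)) (Fin (n+1)) KK :=
  Matrix.of fun i j =>
    if i = j then 1
    else if p ≤ (i : ℕ) ∧ (i : ℕ) ≤ q ∧ (j : ℕ) = q + 1 then tz (lam i - lam (q + 1) - N)
    else 0

/- ### Auxiliary material -/

lemma tz_mul (x y : ℤ) : tz x * tz y = tz (x + y) := by
  simp [tz, HahnSeries.single_mul_single]

lemma coeO_X_pow (m : ℕ) : coeO (PowerSeries.X ^ m : OO) = tz (m : ℤ) := by
  rw [map_pow]
  simp [tz, coeO, HahnSeries.ofPowerSeries_X_pow (Γ := ℤ) (R := ℂ) m]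

lemma sum_two {β : Type*} [AddCommMonoid β] {m : ℕ} (f : Fin m → β) (a b : Fin m)
    (hab : a ≠ b) (h0 : ∀ k, k ≠ a → k ≠ b → f k = 0) : ∑ k, f k = f a + f b := by
  rw [← Finset.sum_pair hab]
  refine (Finset.sum_subset (Finset.subset_univ _) ?_).symm
  intro x _ hx
  simp only [Finset.mem_insert, Finset.mem_singleton] at hx
  push_neg at hx
  exact h0 x hx.1 hx.2

lemma tz_cancel (x y z : ℤ) (h : x + y = z) : tz x * -tz y + tz z = 0 := by
  have hh : tz x * -tz y = -(tz x * tz y) := by ring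
  rw [hh, tz_mul, h, neg_add_cancel]

/-- The matrix `g`. -/
def gMat (n N p q : ℕ) : Matrix (Fin (n+1)) (Fin (n+1)) OO :=
  Matrix.of fun i j =>
    if (i:ℕ) = p then (if (j:ℕ) = q+1 then 1 else 0)
    else if (i:ℕ) = q+1 then (if (j:ℕ) = p then -1 else if (j:ℕ) = q+1 then (PowerSeries.X : OO) ^ N else 0)
    else if (j:ℕ) = q+1 ∧ p < (i:ℕ) ∧ (i:ℕ) ≤ q then 1
    else if (i:ℕ) = (j:ℕ) then 1 else 0

/-- A right inverse for `g`. -/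
def gInv (n N p q : ℕ) : Matrix (Fin (n+1)) (Fin (n+1)) OO :=
  Matrix.of fun i j =>
    if (j:ℕ) = p then (if (i:ℕ) = p then (PowerSeries.X : OO) ^ N else if (i:ℕ) = q+1 then 1
      else if p < (i:ℕ) ∧ (i:ℕ) ≤ q then -1 else 0)
    else if (j:ℕ) = q+1 then (if (i:ℕ) = p then -1 else 0)
    else if (i:ℕ) = (j:ℕ) then 1 else 0

/-- The matrix `h`. -/
def hMat (n N p q : ℕ) (mu : ℕ → ℤ) : Matrix (Fin (n+1)) (Fin (n+1)) OO :=
  Matrix.of fun i j =>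
    if (i:ℕ) = (j:ℕ) then 1
    else if (j:ℕ) = p then
      (if (i:ℕ) = q+1 then (PowerSeries.X : OO) ^ (mu p - N - mu (q+1)).toNat
       else if p < (i:ℕ) ∧ (i:ℕ) ≤ q then -(PowerSeries.X : OO) ^ (mu p - N - mu (i:ℕ)).toNat
       else 0)
    else 0

/-- A right inverse for `h`. -/
def hInv (n N p q : ℕ) (mu : ℕ → ℤ) : Matrix (Fin (n+1)) (Fin (n+1)) OO :=
  Matrix.of fun i j =>
    if (i:ℕ) = (j:ℕ) then 1
    else if (j:ℕ) = p then
      (if (i:ℕ) = q+1 then -(PowerSeries.X : OO) ^ (mu p - N - mu (q+1)).toNat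
       else if p < (i:ℕ) ∧ (i:ℕ) ≤ q then (PowerSeries.X : OO) ^ (mu p - N - mu (i:ℕ)).toNat
       else 0)
    else 0

lemma gMat_mul_gInv (n N p q : ℕ) (hpq : p ≤ q) (hq : q < n) :
    gMat n N p q * gInv n N p q = 1 := by
  have hpn : p < n + 1 := by omega
  have hqn : q + 1 < n + 1 := by omega
  apply Matrix.ext
  intro i j
  rw [Matrix.mul_apply, Matrix.one_apply]
  simp only [← Fin.val_eq_val]
  by_cases hip : (i:ℕ) = p
  · rw [Fintype.sum_eq_single (⟨q+1, hqn⟩ : Fin (n+1)) (fun k hk => ?_)]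
    · simp only [gMat, gInv, Matrix.of_apply, hip, eq_self_iff_true, if_true, true_and]
      split_ifs <;> first | rfl | (exfalso; omega) | ring
    · have hk' : (k:ℕ) ≠ q+1 := fun h => hk (Fin.ext h)
      simp only [gMat, Matrix.of_apply, hip, eq_self_iff_true, if_true, if_neg hk', zero_mul]
  · by_cases hiq : (i:ℕ) = q+1
    · rw [sum_two _ (⟨p, hpn⟩ : Fin (n+1)) (⟨q+1, hqn⟩ : Fin (n+1))
        (by simp [Fin.ext_iff]; omega) (fun k hk1 hk2 => ?_)]
      · simp only [gMat, gInv, Matrix.of_apply, hiq, eq_self_iff_true, if_true, true_and,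
          if_neg hip]
        split_ifs <;> first | rfl | (exfalso; omega) | ring
      · have h1 : (k:ℕ) ≠ p := fun h => hk1 (Fin.ext h)
        have h2 : (k:ℕ) ≠ q+1 := fun h => hk2 (Fin.ext h)
        simp only [gMat, Matrix.of_apply, if_neg hip, hiq, eq_self_iff_true, if_true,
          if_neg h1, if_neg h2, zero_mul]
        split_ifs <;> simp
    · by_cases hmid : p < (i:ℕ) ∧ (i:ℕ) ≤ q
      · rw [sum_two _ i (⟨q+1, hqn⟩ : Fin (n+1))
          (fun h => hiq (by rw [h])) (fun k hk1 hk2 => ?_)]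
        · simp only [gMat, gInv, Matrix.of_apply, eq_self_iff_true, if_true, true_and,
            if_neg hip, if_neg hiq]
          split_ifs <;> first | rfl | (exfalso; omega) | ring
        · have h1 : (k:ℕ) ≠ (i:ℕ) := fun h => hk1 (Fin.ext h)
          have h2 : (k:ℕ) ≠ q+1 := fun h => hk2 (Fin.ext h)
          simp only [gMat, Matrix.of_apply, if_neg hip, if_neg hiq]
          rw [if_neg (by omega), if_neg (by omega), zero_mul]
      · rw [Fintype.sum_eq_single i (fun k hk => ?_)]
        · simp only [gMat, gInv, Matrix.of_apply, eq_self_iff_true, if_true, true_and,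
            if_neg hip, if_neg hiq]
          split_ifs <;> first | rfl | (exfalso; omega) | ring
        · have h1 : (k:ℕ) ≠ (i:ℕ) := fun h => hk (Fin.ext h)
          simp only [gMat, Matrix.of_apply, if_neg hip, if_neg hiq]
          rw [if_neg (by omega), if_neg (by omega), zero_mul]

lemma hMat_mul_hInv (n N p q : ℕ) (mu : ℕ → ℤ) (hpq : p ≤ q) (hq : q < n) :
    hMat n N p q mu * hInv n N p q mu = 1 := by
  have hpn : p < n + 1 := by omega
  apply Matrix.ext
  intro i j
  rw [Matrix.mul_apply, Matrix.one_apply]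
  simp only [← Fin.val_eq_val]
  by_cases hip : (i:ℕ) = p
  · rw [Fintype.sum_eq_single i (fun k hk => ?_)]
    · simp only [hMat, hInv, Matrix.of_apply, hip, eq_self_iff_true, if_true]
      split_ifs <;> first | rfl | (exfalso; omega) | ring
    · have h1 : (k:ℕ) ≠ (i:ℕ) := fun h => hk (Fin.ext h)
      simp only [hMat, Matrix.of_apply]
      rw [if_neg (by omega), if_neg (by omega), zero_mul]
  · rw [sum_two _ i (⟨p, hpn⟩ : Fin (n+1))
      (by simp [Fin.ext_iff]; omega) (fun k hk1 hk2 => ?_)]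
    · simp only [hMat, hInv, Matrix.of_apply, eq_self_iff_true, if_true]
      split_ifs <;> first | rfl | (exfalso; omega) | ring
    · have h1 : (k:ℕ) ≠ (i:ℕ) := fun h => hk1 (Fin.ext h)
      have h2 : (k:ℕ) ≠ p := fun h => hk2 (Fin.ext h)
      simp only [hMat, Matrix.of_apply]
      rw [if_neg (by omega), if_neg (by omega), zero_mul]

/-- there exist `g, h ∈ GL_{n+1}(𝒪)` with `t^{−λ} · x̃ · t^{ν*} = g · t^{μ} · h`
over `K`, where `ν* = λ + μ − Nβ∨`.  (Indices are `0`-based: rows and columns run through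
`0,…,n`, and `0 ≤ p ≤ q ≤ n−1`.) -/
theorem stmt2 (n : ℕ) (hn : 1 ≤ n) (N : ℕ) (hN : 1 ≤ N)
    (p q : ℕ) (hpq : p ≤ q) (hq : q < n)
    (lam mu : ℕ → ℤ)
    (hlam : ∀ i j : ℕ, i ≤ j → j ≤ n → lam j ≤ lam i)
    (hmu : ∀ i j : ℕ, i ≤ j → j ≤ n → mu j ≤ mu i)
    (nus : ℕ → ℤ) (hnus : ∀ i, nus i = lam i + mu i - N * bcov p q i)
    (hnusdom : ∀ i j : ℕ, i ≤ j → j ≤ n → nus j ≤ nus i)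
    (h2a : (N : ℤ) ≤ lam p - lam (p + 1)) (h2b : (N : ℤ) ≤ lam q - lam (q + 1))
    (h2c : (N : ℤ) ≤ mu p - mu (p + 1)) (h2d : (N : ℤ) ≤ mu q - mu (q + 1)) :
    ∃ g h : Matrix (Fin (n+1)) (Fin (n+1)) OO,
      IsUnit g.det ∧ IsUnit h.det ∧
      Matrix.diagonal (fun i : Fin (n+1) => tz (-(lam i))) * xtMat n N p q lam *
          Matrix.diagonal (fun i : Fin (n+1) => tz (nus i)) =
        g.map coeO * Matrix.diagonal (fun i : Fin (n+1) => tz (mu i)) * h.map coeO := by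
  have hpn : p < n + 1 := by omega
  have hqn : q + 1 < n + 1 := by omega
  have hvp : nus p = lam p + mu p - N := by
    rw [hnus]; unfold bcov; rw [if_pos rfl, if_neg (by omega)]; ring
  have hvq : nus (q+1) = lam (q+1) + mu (q+1) + N := by
    rw [hnus]; unfold bcov; rw [if_neg (by omega), if_pos rfl]; ring
  have hv0 : ∀ m : ℕ, m ≠ p → m ≠ q+1 → nus m = lam m + mu m := by
    intro m h1 h2
    rw [hnus]; unfold bcov; rw [if_neg h1, if_neg h2]; ring
  have hmupq : mu (q+1) ≤ mu (p+1) := hmu (p+1) (q+1) (by omega) (by omega)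
  have he1 : ((mu p - N - mu (q+1)).toNat : ℤ) = mu p - N - mu (q+1) := by
    rw [Int.toNat_of_nonneg]; omega
  have hei : ∀ m : ℕ, p < m → m ≤ q → ((mu p - N - mu m).toNat : ℤ) = mu p - N - mu m := by
    intro m h1 h2
    have := hmu (p+1) m h1 (by omega)
    rw [Int.toNat_of_nonneg]; omega
  have hPv : ((⟨p, hpn⟩ : Fin (n+1)) : ℕ) = p := rfl
  have hQv : ((⟨q+1, hqn⟩ : Fin (n+1)) : ℕ) = q+1 := rfl
  refine ⟨gMat n N p q, hMat n N p q mu,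
    Matrix.isUnit_det_of_right_inverse (gMat_mul_gInv n N p q hpq hq),
    Matrix.isUnit_det_of_right_inverse (hMat_mul_hInv n N p q mu hpq hq), ?_⟩
  apply Matrix.ext
  intro i j
  rw [Matrix.mul_diagonal, Matrix.diagonal_mul, Matrix.mul_assoc, Matrix.mul_apply]
  simp only [Matrix.diagonal_mul, Matrix.map_apply]
  by_cases hip : (i:ℕ) = p
  · rw [Fintype.sum_eq_single (⟨q+1, hqn⟩ : Fin (n+1)) (fun k hk => ?_)]
    swap
    · have hk' : (k:ℕ) ≠ q+1 := fun h => hk (Fin.ext h)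
      have hg0 : gMat n N p q i k = 0 := by
        simp only [gMat, Matrix.of_apply, hPv, hQv]
        split_ifs <;> first | rfl | (exfalso; omega)
      rw [hg0, _root_.map_zero, zero_mul]
    · simp only [hQv]
      have hgiQ : gMat n N p q i ⟨q+1, hqn⟩ = 1 := by
        simp only [gMat, Matrix.of_apply, hPv, hQv]
        split_ifs <;> first | rfl | (exfalso; omega)
      rw [hgiQ, _root_.map_one, one_mul]
      by_cases hjp : (j:ℕ) = p
      · have hxt : xtMat n N p q lam i j = 1 := by
          simp only [xtMat, Matrix.of_apply, hPv, hQv, ← Fin.val_eq_val]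
          split_ifs <;> first | rfl | (exfalso; omega)
        have hh : hMat n N p q mu ⟨q+1, hqn⟩ j =
            (PowerSeries.X : OO) ^ (mu p - N - mu (q+1)).toNat := by
          simp only [hMat, Matrix.of_apply, hPv, hQv]
          split_ifs <;> first | rfl | (exfalso; omega)
        rw [hxt, hh, coeO_X_pow, mul_one, hip, hjp, hvp, tz_mul, tz_mul]
        congr 1
        omega
      · by_cases hjq : (j:ℕ) = q+1
        · have hxt : xtMat n N p q lam i j = tz (lam (i:ℕ) - lam (q+1) - N) := by
            simp only [xtMat, Matrix.of_apply, hPv, hQv, ← Fin.val_eq_val]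
            split_ifs <;> first | rfl | (exfalso; omega)
          have hh : hMat n N p q mu ⟨q+1, hqn⟩ j = 1 := by
            simp only [hMat, Matrix.of_apply, hPv, hQv]
            split_ifs <;> first | rfl | (exfalso; omega)
          rw [hxt, hh, _root_.map_one, mul_one, hip, hjq, hvq, tz_mul, tz_mul]
          congr 1
          ring
        · have hxt : xtMat n N p q lam i j = 0 := by
            simp only [xtMat, Matrix.of_apply, hPv, hQv, ← Fin.val_eq_val]
            split_ifs <;> first | rfl | (exfalso; omega)
          have hh : hMat n N p q mu ⟨q+1, hqn⟩ j = 0 := by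
            simp only [hMat, Matrix.of_apply, hPv, hQv]
            split_ifs <;> first | rfl | (exfalso; omega)
          rw [hxt, hh, _root_.map_zero, mul_zero, mul_zero, zero_mul]
  · by_cases hiq : (i:ℕ) = q+1
    · rw [sum_two _ (⟨p, hpn⟩ : Fin (n+1)) (⟨q+1, hqn⟩ : Fin (n+1))
        (by simp [Fin.ext_iff]; omega) (fun k hk1 hk2 => ?_)]
      swap
      · have h1 : (k:ℕ) ≠ p := fun h => hk1 (Fin.ext h)
        have h2 : (k:ℕ) ≠ q+1 := fun h => hk2 (Fin.ext h)
        have hg0 : gMat n N p q i k = 0 := by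
          simp only [gMat, Matrix.of_apply, hPv, hQv]
          split_ifs <;> first | rfl | (exfalso; omega)
        rw [hg0, _root_.map_zero, zero_mul]
      · simp only [hPv, hQv]
        have hgP : gMat n N p q i ⟨p, hpn⟩ = -1 := by
          simp only [gMat, Matrix.of_apply, hPv, hQv]
          split_ifs <;> first | rfl | (exfalso; omega)
        have hgQ : gMat n N p q i ⟨q+1, hqn⟩ = (PowerSeries.X : OO) ^ N := by
          simp only [gMat, Matrix.of_apply, hPv, hQv]
          split_ifs <;> first | rfl | (exfalso; omega)
        rw [hgP, hgQ, _root_.map_neg, _root_.map_one, coeO_X_pow]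
        by_cases hjp : (j:ℕ) = p
        · -- entry (q+1, p): cancellation
          have hxt : xtMat n N p q lam i j = 0 := by
            simp only [xtMat, Matrix.of_apply, hPv, hQv, ← Fin.val_eq_val]
            split_ifs <;> first | rfl | (exfalso; omega)
          have hhP : hMat n N p q mu ⟨p, hpn⟩ j = 1 := by
            simp only [hMat, Matrix.of_apply, hPv, hQv]
            split_ifs <;> first | rfl | (exfalso; omega)
          have hhQ : hMat n N p q mu ⟨q+1, hqn⟩ j =
              (PowerSeries.X : OO) ^ (mu p - N - mu (q+1)).toNat := by
            simp only [hMat, Matrix.of_apply, hPv, hQv]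
            split_ifs <;> first | rfl | (exfalso; omega)
          rw [hxt, hhP, hhQ, _root_.map_one, coeO_X_pow, mul_zero, zero_mul, mul_one, tz_mul,
            tz_mul]
          rw [show (N:ℤ) + (mu (q+1) + ((mu p - N - mu (q+1)).toNat : ℤ)) = mu p from by omega]
          ring
        · by_cases hjq : (j:ℕ) = q+1
          · have hxt : xtMat n N p q lam i j = 1 := by
              simp only [xtMat, Matrix.of_apply, hPv, hQv, ← Fin.val_eq_val]
              split_ifs <;> first | rfl | (exfalso; omega)
            have hhP : hMat n N p q mu ⟨p, hpn⟩ j = 0 := by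
              simp only [hMat, Matrix.of_apply, hPv, hQv]
              split_ifs <;> first | rfl | (exfalso; omega)
            have hhQ : hMat n N p q mu ⟨q+1, hqn⟩ j = 1 := by
              simp only [hMat, Matrix.of_apply, hPv, hQv]
              split_ifs <;> first | rfl | (exfalso; omega)
            rw [hxt, hhP, hhQ, _root_.map_zero, _root_.map_one, mul_zero, mul_zero, zero_add,
              mul_one, mul_one, hiq, hjq, hvq, tz_mul, tz_mul]
            congr 1
            ring
          · have hxt : xtMat n N p q lam i j = 0 := by
              simp only [xtMat, Matrix.of_apply, hPv, hQv, ← Fin.val_eq_val]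
              split_ifs <;> first | rfl | (exfalso; omega)
            have hhP : hMat n N p q mu ⟨p, hpn⟩ j = 0 := by
              simp only [hMat, Matrix.of_apply, hPv, hQv]
              split_ifs <;> first | rfl | (exfalso; omega)
            have hhQ : hMat n N p q mu ⟨q+1, hqn⟩ j = 0 := by
              simp only [hMat, Matrix.of_apply, hPv, hQv]
              split_ifs <;> first | rfl | (exfalso; omega)
            rw [hxt, hhP, hhQ, _root_.map_zero]
            simp
    · by_cases hmid : p < (i:ℕ) ∧ (i:ℕ) ≤ q
      · rw [sum_two _ i (⟨q+1, hqn⟩ : Fin (n+1))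
          (fun h => hiq (by rw [h])) (fun k hk1 hk2 => ?_)]
        swap
        · have h1 : (k:ℕ) ≠ (i:ℕ) := fun h => hk1 (Fin.ext h)
          have h2 : (k:ℕ) ≠ q+1 := fun h => hk2 (Fin.ext h)
          have hg0 : gMat n N p q i k = 0 := by
            simp only [gMat, Matrix.of_apply, hPv, hQv]
            split_ifs <;> first | rfl | (exfalso; omega)
          rw [hg0, _root_.map_zero, zero_mul]
        · simp only [hQv]
          have hgi : gMat n N p q i i = 1 := by
            simp only [gMat, Matrix.of_apply, hPv, hQv]
            split_ifs <;> first | rfl | (exfalso; omega)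
          have hgQ : gMat n N p q i ⟨q+1, hqn⟩ = 1 := by
            simp only [gMat, Matrix.of_apply]
            rw [if_neg hip, if_neg hiq, if_pos ⟨trivial, hmid.1, hmid.2⟩]
          rw [hgi, hgQ, _root_.map_one, one_mul, one_mul]
          by_cases hjp : (j:ℕ) = p
          · -- entry (i, p), p < i ≤ q : cancellation
            have hxt : xtMat n N p q lam i j = 0 := by
              simp only [xtMat, Matrix.of_apply, hPv, hQv, ← Fin.val_eq_val]
              split_ifs <;> first | rfl | (exfalso; omega)
            have hhi : hMat n N p q mu i j =
                -(PowerSeries.X : OO) ^ (mu p - N - mu (i:ℕ)).toNat := by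
              simp only [hMat, Matrix.of_apply, hPv, hQv]
              split_ifs <;> first | rfl | (exfalso; omega)
            have hhQ : hMat n N p q mu ⟨q+1, hqn⟩ j =
                (PowerSeries.X : OO) ^ (mu p - N - mu (q+1)).toNat := by
              simp only [hMat, Matrix.of_apply, hPv, hQv]
              split_ifs <;> first | rfl | (exfalso; omega)
            rw [hxt, hhi, hhQ, _root_.map_neg, coeO_X_pow, coeO_X_pow, mul_zero, zero_mul]
            rw [tz_mul]
            exact (tz_cancel _ _ _ (by rw [hei (i:ℕ) hmid.1 hmid.2, he1]; ring)).symm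
          · by_cases hjq : (j:ℕ) = q+1
            · have hxt : xtMat n N p q lam i j = tz (lam (i:ℕ) - lam (q+1) - N) := by
                simp only [xtMat, Matrix.of_apply, hPv, hQv, ← Fin.val_eq_val]
                split_ifs <;> first | rfl | (exfalso; omega)
              have hhi : hMat n N p q mu i j = 0 := by
                simp only [hMat, Matrix.of_apply, hPv, hQv]
                split_ifs <;> first | rfl | (exfalso; omega)
              have hhQ : hMat n N p q mu ⟨q+1, hqn⟩ j = 1 := by
                simp only [hMat, Matrix.of_apply, hPv, hQv]
                split_ifs <;> first | rfl | (exfalso; omega)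
              rw [hxt, hhi, hhQ, _root_.map_zero, _root_.map_one, mul_zero, zero_add, mul_one,
                hjq, hvq, tz_mul, tz_mul]
              congr 1
              ring
            · by_cases hji : (j:ℕ) = (i:ℕ)
              · have hxt : xtMat n N p q lam i j = 1 := by
                  simp only [xtMat, Matrix.of_apply, hPv, hQv, ← Fin.val_eq_val]
                  split_ifs <;> first | rfl | (exfalso; omega)
                have hhi : hMat n N p q mu i j = 1 := by
                  simp only [hMat, Matrix.of_apply, hPv, hQv]
                  split_ifs <;> first | rfl | (exfalso; omega)
                have hhQ : hMat n N p q mu ⟨q+1, hqn⟩ j = 0 := by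
                  simp only [hMat, Matrix.of_apply, hPv, hQv]
                  split_ifs <;> first | rfl | (exfalso; omega)
                rw [hxt, hhi, hhQ, _root_.map_zero, _root_.map_one, mul_zero, add_zero,
                  mul_one, mul_one, hji, hv0 (i:ℕ) hip hiq, tz_mul]
                congr 1
                ring
              · have hxt : xtMat n N p q lam i j = 0 := by
                  simp only [xtMat, Matrix.of_apply, hPv, hQv, ← Fin.val_eq_val]
                  split_ifs <;> first | rfl | (exfalso; omega)
                have hhi : hMat n N p q mu i j = 0 := by
                  simp only [hMat, Matrix.of_apply, hPv, hQv]
                  split_ifs <;> first | rfl | (exfalso; omega)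
                have hhQ : hMat n N p q mu ⟨q+1, hqn⟩ j = 0 := by
                  simp only [hMat, Matrix.of_apply, hPv, hQv]
                  split_ifs <;> first | rfl | (exfalso; omega)
                rw [hxt, hhi, hhQ, _root_.map_zero]
                simp
      · rw [Fintype.sum_eq_single i (fun k hk => ?_)]
        swap
        · have h1 : (k:ℕ) ≠ (i:ℕ) := fun h => hk (Fin.ext h)
          have hg0 : gMat n N p q i k = 0 := by
            simp only [gMat, Matrix.of_apply, hPv, hQv]
            split_ifs <;> first | rfl | (exfalso; omega)
          rw [hg0, _root_.map_zero, zero_mul]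
        · have hgi : gMat n N p q i i = 1 := by
            simp only [gMat, Matrix.of_apply, hPv, hQv]
            split_ifs <;> first | rfl | (exfalso; omega)
          rw [hgi, _root_.map_one, one_mul]
          by_cases hji : (j:ℕ) = (i:ℕ)
          · have hxt : xtMat n N p q lam i j = 1 := by
              simp only [xtMat, Matrix.of_apply, hPv, hQv, ← Fin.val_eq_val]
              split_ifs <;> first | rfl | (exfalso; omega)
            have hhi : hMat n N p q mu i j = 1 := by
              simp only [hMat, Matrix.of_apply, hPv, hQv]
              split_ifs <;> first | rfl | (exfalso; omega)
            rw [hxt, hhi, _root_.map_one, mul_one, mul_one, hji, hv0 (i:ℕ) hip hiq, tz_mul]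
            congr 1
            ring
          · have hxt : xtMat n N p q lam i j = 0 := by
              simp only [xtMat, Matrix.of_apply, hPv, hQv, ← Fin.val_eq_val]
              split_ifs <;> first | rfl | (exfalso; omega)
            have hhi : hMat n N p q mu i j = 0 := by
              simp only [hMat, Matrix.of_apply, hPv, hQv]
              split_ifs <;> first | rfl | (exfalso; omega)
            rw [hxt, hhi, _root_.map_zero, mul_zero, mul_zero, zero_mul]
end
end

section
/- For every family of elements c_{i,j}, one for each pair (i,j) of case (C), (D) or (E), satisfying c_{p,j} ∈ t^{λ_p − λ_j}𝒪 for case-(C) pairs, c_{i,j} ∈ t^{λ_i − λ_j}𝒪 for case-(D) pairs, and c_{p,j} ∈ t^{λ_p − λ_j − N}𝒪 for case-(E) pairs, there exists v ∈ V such that: (a) (x⁻¹ v x)_{i,j} ∈ t^{ν*_i − ν*_j}𝒪 for every case-(B) pair (i,j), and (b) (x⁻¹ v x)_{i,j} − c_{i,j} ∈ t^{ν*_i − ν*_j}𝒪 for every pair (i,j) of case (C), (D) or (E). (This is the surjectivity of the map φ₂ of Lemma 4.5.) -/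
open Matrix

noncomputable section

/-- `f` belongs to the `𝒪`-lattice `t^k 𝒪 ⊆ K`. -/
def memT (k : ℤ) (f : KK) : Prop := ∃ w : OO, f = tz k * coeO w

/-- The matrix `x = I + Σ_{j=p+1}^{q+1} t^{λ_p − λ_j − N} E_{p,j}` (indices `0`-based). -/
def xMat (n N p q : ℕ) (lam : ℕ → ℤ) : Matrix (Fin (n+1)) (Fin (n+1)) KK :=
  Matrix.of fun i j =>
    if i = j then 1
    else if (i : ℕ) = p ∧ p < (j : ℕ) ∧ (j : ℕ) ≤ q + 1 then tz (lam p - lam j - N)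
    else 0

/-- `V`: trace-zero matrices with entries in `𝒪` such that `v_{i,j} ∈ t^{λ_i−λ_j}𝒪` for `i < j`. -/
def Vset (n : ℕ) (lam : ℕ → ℤ) : Set (Matrix (Fin (n+1)) (Fin (n+1)) KK) :=
  {v | Matrix.trace v = 0 ∧ (∀ i j : Fin (n+1), memT 0 (v i j)) ∧
    ∀ i j : Fin (n+1), i < j → memT (lam i - lam j) (v i j)}

/-- Case (B): `i ≠ p` and (`j ≤ p` or `j > q+1`). -/
def caseB (p q i j : ℕ) : Prop := i ≠ p ∧ (j ≤ p ∨ q + 1 < j)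

/-- Case (C): `i = p` and `j > q+1`. -/
def caseC (p q i j : ℕ) : Prop := i = p ∧ q + 1 < j

/-- Case (D): `p < j ≤ q+1` and `i ≠ p`. -/
def caseD (p q i j : ℕ) : Prop := p < j ∧ j ≤ q + 1 ∧ i ≠ p

/-- Case (E): `i = p` and `p < j ≤ q+1`. -/
def caseE (p q i j : ℕ) : Prop := i = p ∧ p < j ∧ j ≤ q + 1

/-! Write `x = 1 + U` with `U = E_p ⊗ r`, where `r_j = t^{λ_p−λ_j−N}` for `p < j ≤ q+1` and
`r_j = 0` otherwise; since `r_p = 0`, `U² = 0` and `x⁻¹ = 1 − U`. If column `p` of `v` vanishes off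
the diagonal, conjugating by `x` only changes row `p`, by adding `v_pp r_j − (r v)_j`. So put `c` at
the case-(C) and case-(D) positions of `v` and zeros elsewhere off the diagonal. The case-(E)
entries `c_pj ∈ t^{λ_p−λ_j−N}𝒪` cannot sit in `v_pj ∈ t^{λ_p−λ_j}𝒪`; they are produced instead by
diagonal entries with `(v_pp − v_jj) r_j = c_pj + (r v)_j`, and subtracting the mean of the diagonal
makes `v` traceless without changing these differences. Then `x⁻¹ v x` agrees with `c` exactly on
the pairs of case (C), (D), (E) and vanishes on those of case (B). -/

lemma tz_add (a b : ℤ) : tz (a + b) = tz a * tz b := by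
  simp [tz, HahnSeries.single_mul_single]

lemma tz_neg_mul_tz (a : ℤ) : tz (-a) * tz a = 1 := by
  rw [← tz_add, neg_add_cancel]
  rfl

instance : CharZero KK :=
  (RingHom.charZero_iff (algebraMap ℂ KK).injective).mp inferInstance

lemma memT_zero (k : ℤ) : memT k 0 := ⟨0, by simp⟩

lemma memT_add {k : ℤ} {f g : KK} (hf : memT k f) (hg : memT k g) : memT k (f + g) := by
  obtain ⟨w, rfl⟩ := hf
  obtain ⟨u, rfl⟩ := hg
  exact ⟨w + u, by rw [map_add, mul_add]⟩

lemma memT_sub {k : ℤ} {f g : KK} (hf : memT k f) (hg : memT k g) : memT k (f - g) := by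
  obtain ⟨w, rfl⟩ := hf
  obtain ⟨u, rfl⟩ := hg
  exact ⟨w - u, by rw [map_sub, mul_sub]⟩

lemma memT_sum {ι : Type*} {k : ℤ} (s : Finset ι) {f : ι → KK} (h : ∀ i ∈ s, memT k (f i)) :
    memT k (∑ i ∈ s, f i) :=
  Finset.sum_induction f (memT k) (fun _ _ => memT_add) (memT_zero k) h

lemma memT_tz_mul {k : ℤ} (m : ℤ) {f : KK} (hf : memT k f) : memT (m + k) (tz m * f) := by
  obtain ⟨w, rfl⟩ := hf
  exact ⟨w, by rw [← mul_assoc, tz_add]⟩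

lemma memT_of_le {k m : ℤ} (h : k ≤ m) {f : KK} (hf : memT m f) : memT k f := by
  obtain ⟨w, rfl⟩ := hf
  refine ⟨PowerSeries.X ^ (m - k).toNat * w, ?_⟩
  rw [map_mul, ← mul_assoc, coeO, HahnSeries.ofPowerSeries_X_pow, ← tz, ← tz_add]
  congr 2
  omega

lemma memT_inv_natCast_mul {k : ℤ} (m : ℕ) {f : KK} (hf : memT k f) :
    memT k ((m : KK)⁻¹ * f) := by
  obtain ⟨w, rfl⟩ := hf
  refine ⟨PowerSeries.C (m : ℂ)⁻¹ * w, ?_⟩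
  have hC : coeO (PowerSeries.C (m : ℂ)⁻¹) = (m : KK)⁻¹ := by
    have h := map_inv₀ (coeO.comp PowerSeries.C) (m : ℂ)
    rwa [RingHom.comp_apply, map_natCast] at h
  rw [map_mul, hC]
  ring

section RankOneUnipotent

variable {ι R : Type*} [Fintype ι] [DecidableEq ι] [CommRing R] {P : ι} {r : ι → R}

lemma vecMulVec_single_one_mul_self (hr : r P = 0) :
    vecMulVec (Pi.single P 1) r * vecMulVec (Pi.single P 1) r = 0 := by
  rw [vecMulVec_mul_vecMulVec, dotProduct_single_one, hr, zero_smul, vecMulVec_zero]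

lemma inv_one_add_vecMulVec_single_one (hr : r P = 0) :
    (1 + vecMulVec (Pi.single P 1) r)⁻¹ = 1 - vecMulVec (Pi.single P 1) r :=
  inv_eq_right_inv (by
    rw [mul_sub, mul_one, add_mul, one_mul, vecMulVec_single_one_mul_self hr]
    abel)

lemma inv_one_add_vecMulVec_single_one_mul_mul (hr : r P = 0) {v : Matrix ι ι R}
    (hv : ∀ k ≠ P, v k P = 0) :
    (1 + vecMulVec (Pi.single P 1) r)⁻¹ * v * (1 + vecMulVec (Pi.single P 1) r) =
      v + vecMulVec (Pi.single P 1) (v P P • r - r ᵥ* v) := by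
  have hcol : v *ᵥ Pi.single P 1 = Pi.single P (v P P) := by
    ext k
    by_cases hk : k = P
    · subst hk; simp
    · simp [hk, hv k hk]
  rw [inv_one_add_vecMulVec_single_one hr, sub_mul, one_mul, mul_add, mul_one, sub_mul,
    Matrix.mul_assoc, vecMulVec_mul, mul_vecMulVec, mul_vecMulVec, hcol, vecMulVec_mulVec,
    dotProduct_single, hr, zero_mul]
  ext i j
  by_cases hi : i = P
  · subst hi; simp [vecMulVec_apply]; ring
  · simp [vecMulVec_apply, hi]

end RankOneUnipotent

instance (p q i j : ℕ) : Decidable (caseC p q i j) := inferInstanceAs (Decidable (_ ∧ _))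

instance (p q i j : ℕ) : Decidable (caseD p q i j) := inferInstanceAs (Decidable (_ ∧ _))

instance (p q i j : ℕ) : Decidable (caseE p q i j) := inferInstanceAs (Decidable (_ ∧ _))

section Phi2Preimage

variable {n : ℕ} (N q : ℕ) (lam : ℕ → ℤ) (P : Fin (n + 1))
  (c : Fin (n + 1) → Fin (n + 1) → KK)

def xRow (j : Fin (n + 1)) : KK :=
  if (P : ℕ) < j ∧ (j : ℕ) ≤ q + 1 then tz (lam P - lam j - N) else 0

lemma xRow_self : xRow N q lam P P = 0 := by
  simp [xRow]

lemma xMat_eq_one_add_vecMulVec :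
    xMat n N P q lam = 1 + vecMulVec (Pi.single P 1) (xRow N q lam P) := by
  ext i j : 1
  rw [xMat, of_apply, Matrix.add_apply, one_apply, vecMulVec_apply, xRow]
  by_cases hi : i = P
  · subst hi
    by_cases hij : i = j
    · subst hij; simp
    · simp [hij]
  · simp [hi, Fin.val_ne_of_ne hi]

def upperPart : Matrix (Fin (n + 1)) (Fin (n + 1)) KK :=
  of fun i j => if (i : ℕ) < j ∧ (caseC P q i j ∨ caseD P q i j) then c i j else 0

def diagDefect (j : Fin (n + 1)) : KK :=
  if (P : ℕ) < j ∧ (j : ℕ) ≤ q + 1 then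
    tz (-(lam P - lam j - N)) * (c P j + (xRow N q lam P ᵥ* upperPart q P c) j)
  else 0

def phi2Preimage : Matrix (Fin (n + 1)) (Fin (n + 1)) KK :=
  upperPart q P c + diagonal fun i =>
    ((n + 1 : ℕ) : KK)⁻¹ * ∑ k, diagDefect N q lam P c k - diagDefect N q lam P c i

variable {N q lam P c}

lemma upperPart_apply_self (i : Fin (n + 1)) : upperPart q P c i i = 0 := by
  simp [upperPart]

lemma memT_upperPart
    (hcC : ∀ i j : Fin (n + 1), i < j → caseC P q i j → memT (lam i - lam j) (c i j))
    (hcD : ∀ i j : Fin (n + 1), i < j → caseD P q i j → memT (lam i - lam j) (c i j))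
    {i j : Fin (n + 1)} (hij : i < j) : memT (lam i - lam j) (upperPart q P c i j) := by
  rw [upperPart, of_apply]
  split_ifs with h
  · exact h.2.elim (hcC i j hij) (hcD i j hij)
  · exact memT_zero _

lemma xRow_vecMul_upperPart_of_not_mem {j : Fin (n + 1)}
    (hj : ¬((P : ℕ) < j ∧ (j : ℕ) ≤ q + 1)) :
    (xRow N q lam P ᵥ* upperPart q P c) j = 0 := by
  rw [vecMul, dotProduct]
  refine Finset.sum_eq_zero fun k _ => ?_
  simp only [xRow, upperPart, of_apply]
  split_ifs with hk hkj
  · simp only [caseC, caseD] at hkj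
    omega
  all_goals simp

lemma memT_xRow_vecMul_upperPart
    (hcD : ∀ i j : Fin (n + 1), i < j → caseD P q i j → memT (lam i - lam j) (c i j))
    (j : Fin (n + 1)) : memT (lam P - lam j - N) ((xRow N q lam P ᵥ* upperPart q P c) j) := by
  rw [vecMul, dotProduct]
  refine memT_sum _ fun k _ => ?_
  simp only [xRow, upperPart, of_apply]
  split_ifs with hk hkj
  · have hD : caseD P q k j := hkj.2.resolve_left fun hC => by unfold caseC at hC; omega
    have h := memT_tz_mul (lam P - lam k - N) (hcD k j (Fin.lt_def.mpr hkj.1) hD)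
    rwa [show lam P - lam k - N + (lam k - lam j) = lam P - lam j - N by ring] at h
  all_goals simpa using memT_zero _

lemma diagDefect_of_not_mem {j : Fin (n + 1)} (hj : ¬((P : ℕ) < j ∧ (j : ℕ) ≤ q + 1)) :
    diagDefect N q lam P c j = 0 :=
  if_neg hj

lemma diagDefect_mul_xRow {j : Fin (n + 1)} (hj : (P : ℕ) < j ∧ (j : ℕ) ≤ q + 1) :
    diagDefect N q lam P c j * xRow N q lam P j =
      c P j + (xRow N q lam P ᵥ* upperPart q P c) j := by
  rw [diagDefect, xRow, if_pos hj, if_pos hj, mul_right_comm, tz_neg_mul_tz, one_mul]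

lemma memT_diagDefect
    (hcD : ∀ i j : Fin (n + 1), i < j → caseD P q i j → memT (lam i - lam j) (c i j))
    (hcE : ∀ i j : Fin (n + 1), i < j → caseE P q i j → memT (lam i - lam j - N) (c i j))
    (j : Fin (n + 1)) : memT 0 (diagDefect N q lam P c j) := by
  rw [diagDefect]
  split_ifs with hj
  · have h := memT_tz_mul (-(lam P - lam j - N))
      (memT_add (hcE P j (Fin.lt_def.mpr hj.1) ⟨rfl, hj⟩) (memT_xRow_vecMul_upperPart hcD j))
    rwa [neg_add_cancel] at h
  · exact memT_zero _

lemma phi2Preimage_apply_of_ne {i j : Fin (n + 1)} (hij : i ≠ j) :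
    phi2Preimage N q lam P c i j = upperPart q P c i j := by
  simp [phi2Preimage, diagonal_apply_ne _ hij]

lemma phi2Preimage_apply_eq_zero_of_ne {k : Fin (n + 1)} (hk : k ≠ P) :
    phi2Preimage N q lam P c k P = 0 := by
  rw [phi2Preimage_apply_of_ne hk]
  simp [upperPart, caseC, caseD, Fin.val_ne_of_ne hk]

lemma phi2Preimage_mem_Vset (hlam : ∀ i j : ℕ, i ≤ j → j ≤ n → lam j ≤ lam i)
    (hcC : ∀ i j : Fin (n + 1), i < j → caseC P q i j → memT (lam i - lam j) (c i j))
    (hcD : ∀ i j : Fin (n + 1), i < j → caseD P q i j → memT (lam i - lam j) (c i j))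
    (hcE : ∀ i j : Fin (n + 1), i < j → caseE P q i j → memT (lam i - lam j - N) (c i j)) :
    phi2Preimage N q lam P c ∈ Vset n lam := by
  refine ⟨?_, fun i j => ?_, fun i j hij => ?_⟩
  · have hA : trace (upperPart q P c) = 0 := Finset.sum_eq_zero fun i _ => upperPart_apply_self i
    rw [phi2Preimage, trace_add, trace_diagonal, hA, zero_add, Finset.sum_sub_distrib,
      Finset.sum_const, Finset.card_univ, Fintype.card_fin, nsmul_eq_mul, mul_inv_cancel_left₀
        (Nat.cast_ne_zero.mpr n.succ_ne_zero), sub_self]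
  · rcases lt_trichotomy i j with hij | rfl | hji
    · rw [phi2Preimage_apply_of_ne hij.ne]
      exact memT_of_le (by linarith [hlam i j hij.le (Nat.lt_succ_iff.mp j.isLt)])
        (memT_upperPart hcC hcD hij)
    · simp only [phi2Preimage, Matrix.add_apply, upperPart_apply_self, diagonal_apply_eq, zero_add]
      exact memT_sub (memT_inv_natCast_mul _ (memT_sum _ fun k _ => memT_diagDefect hcD hcE k))
        (memT_diagDefect hcD hcE i)
    · rw [phi2Preimage_apply_of_ne hji.ne', upperPart, of_apply, if_neg (by omega)]
      exact memT_zero _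
  · rw [phi2Preimage_apply_of_ne hij.ne]
    exact memT_upperPart hcC hcD hij

lemma phi2Preimage_mul_xRow_sub_xRow_vecMul (j : Fin (n + 1)) :
    phi2Preimage N q lam P c P P * xRow N q lam P j -
        (xRow N q lam P ᵥ* phi2Preimage N q lam P c) j =
      diagDefect N q lam P c j * xRow N q lam P j - (xRow N q lam P ᵥ* upperPart q P c) j := by
  have hP : diagDefect N q lam P c P = 0 := diagDefect_of_not_mem (by omega)
  simp only [phi2Preimage, Matrix.add_apply, diagonal_apply_eq, upperPart_apply_self, vecMul_add,
    Pi.add_apply, vecMul_diagonal, hP]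
  ring

lemma xMat_inv_mul_phi2Preimage_mul_apply {i j : Fin (n + 1)} (hij : i < j) :
    ((xMat n N P q lam)⁻¹ * phi2Preimage N q lam P c * xMat n N P q lam) i j =
      if caseC P q i j ∨ caseD P q i j ∨ caseE P q i j then c i j else 0 := by
  rw [xMat_eq_one_add_vecMulVec, inv_one_add_vecMulVec_single_one_mul_mul (xRow_self N q lam P)
    (v := phi2Preimage N q lam P c) fun _ => phi2Preimage_apply_eq_zero_of_ne]
  simp only [Matrix.add_apply, vecMulVec_apply, Pi.sub_apply, Pi.smul_apply, smul_eq_mul,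
    phi2Preimage_apply_of_ne hij.ne, phi2Preimage_mul_xRow_sub_xRow_vecMul]
  have hij' : (i : ℕ) < j := hij
  by_cases hi : i = P
  · subst hi
    by_cases hj : (i : ℕ) < j ∧ (j : ℕ) ≤ q + 1
    · rw [diagDefect_mul_xRow hj, if_pos (Or.inr (Or.inr ⟨rfl, hj⟩))]
      simp [upperPart, caseC, caseD, hj]
    · rw [diagDefect_of_not_mem hj, xRow_vecMul_upperPart_of_not_mem hj,
        if_pos (Or.inl ⟨rfl, by omega⟩)]
      simp [upperPart, caseC, hij, show q + 1 < (j : ℕ) by omega]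
  · simp [hi, upperPart, caseC, caseE, hij, Fin.val_ne_of_ne hi]

end Phi2Preimage

theorem stmt8_general (n : ℕ) (N : ℕ)
    (p q : ℕ) (hpq : p ≤ q) (hq : q < n)
    (lam : ℕ → ℤ)
    (hlam : ∀ i j : ℕ, i ≤ j → j ≤ n → lam j ≤ lam i)
    (nus : ℕ → ℤ)
    (c : Fin (n+1) → Fin (n+1) → KK)
    (hcC : ∀ i j : Fin (n+1), i < j → caseC p q i j → memT (lam i - lam j) (c i j))
    (hcD : ∀ i j : Fin (n+1), i < j → caseD p q i j → memT (lam i - lam j) (c i j))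
    (hcE : ∀ i j : Fin (n+1), i < j → caseE p q i j → memT (lam i - lam j - N) (c i j)) :
    ∃ v ∈ Vset n lam,
      (∀ i j : Fin (n+1), i < j → caseB p q i j →
        memT (nus i - nus j) (((xMat n N p q lam)⁻¹ * v * xMat n N p q lam) i j)) ∧
      ∀ i j : Fin (n+1), i < j → (caseC p q i j ∨ caseD p q i j ∨ caseE p q i j) →
        memT (nus i - nus j) (((xMat n N p q lam)⁻¹ * v * xMat n N p q lam) i j - c i j) := by
  obtain ⟨P, rfl⟩ : ∃ P : Fin (n + 1), (P : ℕ) = p := ⟨⟨p, by omega⟩, rfl⟩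
  refine ⟨phi2Preimage N q lam P c, phi2Preimage_mem_Vset hlam hcC hcD hcE,
    fun i j hij hB => ?_, fun i j hij hCDE => ?_⟩
  · have hCDE : ¬(caseC P q i j ∨ caseD P q i j ∨ caseE P q i j) := by
      simp only [caseB, caseC, caseD, caseE] at hB ⊢
      omega
    rw [xMat_inv_mul_phi2Preimage_mul_apply hij, if_neg hCDE]
    exact memT_zero _
  · rw [xMat_inv_mul_phi2Preimage_mul_apply hij, if_pos hCDE, sub_self]
    exact memT_zero _

/-- surjectivity of `φ₂`, Lemma 4.5: for any family `c_{i,j}` indexed by the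
pairs of cases (C), (D), (E), with `c_{p,j} ∈ t^{λ_p−λ_j}𝒪` in case (C),
`c_{i,j} ∈ t^{λ_i−λ_j}𝒪` in case (D), and `c_{p,j} ∈ t^{λ_p−λ_j−N}𝒪` in case (E), there is
`v ∈ V` with `(x⁻¹ v x)_{i,j} ∈ t^{ν*_i−ν*_j}𝒪` for every case-(B) pair and
`(x⁻¹ v x)_{i,j} ≡ c_{i,j} mod t^{ν*_i−ν*_j}𝒪` for every pair of case (C), (D) or (E).
(Indices are `0`-based: rows and columns run through `0,…,n`, and `0 ≤ p ≤ q ≤ n−1`.) -/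
theorem stmt8 (n : ℕ) (hn : 1 ≤ n) (N : ℕ) (hN : 1 ≤ N)
    (p q : ℕ) (hpq : p ≤ q) (hq : q < n)
    (lam mu : ℕ → ℤ)
    (hlam : ∀ i j : ℕ, i ≤ j → j ≤ n → lam j ≤ lam i)
    (hmu : ∀ i j : ℕ, i ≤ j → j ≤ n → mu j ≤ mu i)
    (nus : ℕ → ℤ) (hnus : ∀ i, nus i = lam i + mu i - N * bcov p q i)
    (hnusdom : ∀ i j : ℕ, i ≤ j → j ≤ n → nus j ≤ nus i)
    (h2a : (N : ℤ) ≤ lam p - lam (p + 1)) (h2b : (N : ℤ) ≤ lam q - lam (q + 1))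
    (h2c : (N : ℤ) ≤ mu p - mu (p + 1)) (h2d : (N : ℤ) ≤ mu q - mu (q + 1))
    (c : Fin (n+1) → Fin (n+1) → KK)
    (hcC : ∀ i j : Fin (n+1), i < j → caseC p q i j → memT (lam i - lam j) (c i j))
    (hcD : ∀ i j : Fin (n+1), i < j → caseD p q i j → memT (lam i - lam j) (c i j))
    (hcE : ∀ i j : Fin (n+1), i < j → caseE p q i j → memT (lam i - lam j - N) (c i j)) :
    ∃ v ∈ Vset n lam,
      (∀ i j : Fin (n+1), i < j → caseB p q i j →
        memT (nus i - nus j) (((xMat n N p q lam)⁻¹ * v * xMat n N p q lam) i j)) ∧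
      ∀ i j : Fin (n+1), i < j → (caseC p q i j ∨ caseD p q i j ∨ caseE p q i j) →
        memT (nus i - nus j) (((xMat n N p q lam)⁻¹ * v * xMat n N p q lam) i j - c i j) :=
  stmt8_general n N p q hpq hq lam hlam nus c hcC hcD hcE
end
end
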